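/- Let \mu_1,...,\mu_n be i.i.d. from a density f supported on [-1,1] with f \le C_d, and define the unbiased estimator \hat{\psi}(x,t) = (1/n)\sum_j ((\mu_j - x)/t)\varphi_t(x - \mu_j) of \psi(x,t) = (\varphi_t' * f)(x). Then for every x and t > 0, Var(\hat{\psi}(x,t)) \le (K/(n t^{3/2})) E_{z ~ N(0,1)}[f(x + \sqrt{t} z)] for a universal constant K. Consequently \int_R Var(\hat{\psi}(x,t)) dx \le K/(n t^{3/2}). -/

import Mathlib

open MeasureTheory ProbabilityTheory Real

/-- Density of `N(0,t)`. -/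
noncomputable def gaussDensity (t x : ℝ) : ℝ :=
  (Real.sqrt (2 * Real.pi * t))⁻¹ * Real.exp (-x ^ 2 / (2 * t))

/-- Standard Gaussian density. -/
noncomputable def stdGauss (x : ℝ) : ℝ := gaussDensity 1 x

/-!
`ψ̂(x,t)` is the average of the i.i.d. terms `φ_t'(x - μ_j)` with `φ_t'(u) = -(u/t) φ_t(u)`, so its
variance is at most `E[φ_t'(x - μ)²] / n`. Since `(u²/t) e^{-u²/2t} ≤ 2` and `2 ≤ √(2π)`, one has
`φ_t'(u)² ≤ φ_t(u) / t^{3/2}`, whence `Var ψ̂(x,t) ≤ (f ⋆ φ_t)(x) / (n t^{3/2})`: the bound holds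
with `K = 1`. The substitution `μ = x + √t z` turns `(f ⋆ φ_t)(x)` into `E_z[f(x + √t z)]`, and
`∫ (f ⋆ φ_t) = ∫ f · ∫ φ_t = 1` gives the integrated bound.
-/

noncomputable def gaussDensityDeriv (t u : ℝ) : ℝ := -(u / t) * gaussDensity t u

lemma div_mul_gaussDensity_sub (t x μ : ℝ) :
    (μ - x) / t * gaussDensity t (x - μ) = gaussDensityDeriv t (x - μ) := by
  rw [gaussDensityDeriv, ← neg_div, neg_sub]

lemma gaussDensity_eq_gaussianPDFReal {t : ℝ} (ht : 0 ≤ t) :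
    gaussDensity t = gaussianPDFReal 0 t.toNNReal := by
  ext u; simp [gaussDensity, gaussianPDFReal, ht]

lemma integrable_gaussDensity {t : ℝ} (ht : 0 ≤ t) : Integrable (gaussDensity t) := by
  rw [gaussDensity_eq_gaussianPDFReal ht]; exact integrable_gaussianPDFReal _ _

lemma integral_gaussDensity {t : ℝ} (ht : 0 < t) : ∫ u, gaussDensity t u = 1 := by
  rw [gaussDensity_eq_gaussianPDFReal ht.le]
  exact integral_gaussianPDFReal_eq_one _ (toNNReal_pos.2 ht).ne'

lemma gaussDensity_neg (t u : ℝ) : gaussDensity t (-u) = gaussDensity t u := by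
  simp [gaussDensity]

lemma gaussDensity_nonneg (t u : ℝ) : 0 ≤ gaussDensity t u := by
  unfold gaussDensity; positivity

lemma gaussDensity_le {t : ℝ} (ht : 0 ≤ t) (u : ℝ) : gaussDensity t u ≤ (√(2 * π * t))⁻¹ :=
  mul_le_of_le_one_right (by positivity) (exp_le_one_iff.2 (by
    rw [neg_div]; exact neg_nonpos.2 (by positivity)))

lemma sqrt_mul_gaussDensity_sqrt_mul {t : ℝ} (ht : 0 < t) (z : ℝ) :
    √t * gaussDensity t (√t * z) = stdGauss z := by
  have hexp : -(t * z ^ 2) / (2 * t) = -z ^ 2 / (2 * 1) := by field_simp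
  rw [stdGauss, gaussDensity, gaussDensity, mul_pow, sq_sqrt ht.le, sqrt_mul' _ ht.le, mul_one,
    hexp]
  field_simp

lemma sq_mul_exp_neg_le_two {t : ℝ} (ht : 0 < t) (u : ℝ) :
    u ^ 2 / t * exp (-u ^ 2 / (2 * t)) ≤ 2 := by
  have h := mul_exp_neg_le_exp_neg_one (u ^ 2 / (2 * t))
  have h1 : exp (-1) ≤ 1 := exp_le_one_iff.2 (by norm_num)
  calc u ^ 2 / t * exp (-u ^ 2 / (2 * t))
      = 2 * (u ^ 2 / (2 * t) * exp (-(u ^ 2 / (2 * t)))) := by rw [neg_div]; field_simp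
    _ ≤ 2 := by linarith

lemma sq_gaussDensityDeriv_le {t : ℝ} (ht : 0 < t) (u : ℝ) :
    gaussDensityDeriv t u ^ 2 ≤ gaussDensity t u / (t * √t) := by
  have hc : (√(2 * π * t))⁻¹ ≤ (2 * √t)⁻¹ := by
    rw [sqrt_mul' _ ht.le]
    gcongr
    exact (le_sqrt (by norm_num) (by positivity)).2 (by nlinarith [pi_gt_three])
  have hφ := gaussDensity_nonneg t u
  calc gaussDensityDeriv t u ^ 2
      = (u ^ 2 / t * exp (-u ^ 2 / (2 * t))) * (√(2 * π * t))⁻¹ * gaussDensity t u / t := by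
        rw [gaussDensityDeriv, gaussDensity]; ring
    _ ≤ 2 * (2 * √t)⁻¹ * gaussDensity t u / t := by
        gcongr
        exact sq_mul_exp_neg_le_two ht u
    _ = gaussDensity t u / (t * √t) := by field_simp

lemma integral_mul_gaussDensity_sub {t : ℝ} (ht : 0 < t) (f : ℝ → ℝ) (x : ℝ) :
    ∫ μ, f μ * gaussDensity t (x - μ) = ∫ z, stdGauss z * f (x + √t * z) := by
  have hst : 0 < √t := sqrt_pos.2 ht
  calc ∫ μ, f μ * gaussDensity t (x - μ)
      = ∫ u, f (x + u) * gaussDensity t u := by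
        rw [← integral_add_left_eq_self _ x]
        simp [gaussDensity_neg]
    _ = √t * ∫ z, f (x + √t * z) * gaussDensity t (√t * z) := by
        rw [Measure.integral_comp_mul_left (fun u => f (x + u) * gaussDensity t u),
          abs_of_pos (inv_pos.2 hst), smul_eq_mul, mul_inv_cancel_left₀ hst.ne']
    _ = ∫ z, stdGauss z * f (x + √t * z) := by
        rw [← integral_const_mul]
        congr 1 with z
        rw [← sqrt_mul_gaussDensity_sqrt_mul ht]
        ring

lemma integrable_integral_mul_gaussDensity_sub {t : ℝ} (ht : 0 ≤ t) {f : ℝ → ℝ}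
    (hf : Integrable f) : Integrable fun x => ∫ μ, f μ * gaussDensity t (x - μ) :=
  hf.integrable_convolution (ContinuousLinearMap.mul ℝ ℝ) (integrable_gaussDensity ht)

lemma integral_integral_mul_gaussDensity_sub {t : ℝ} (ht : 0 < t) {f : ℝ → ℝ}
    (hf : Integrable f) : ∫ x, ∫ μ, f μ * gaussDensity t (x - μ) = ∫ μ, f μ := by
  simpa only [convolution_def, ContinuousLinearMap.mul_apply', integral_gaussDensity ht,
    mul_one] using
    integral_convolution (ContinuousLinearMap.mul ℝ ℝ) hf (integrable_gaussDensity ht.le)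

section Variance

variable {Ω : Type*} [MeasurableSpace Ω] {P : Measure Ω}

lemma variance_comp_le_integral_mul_sq [IsProbabilityMeasure P] {X : Ω → ℝ} (hX : Measurable X)
    {g : ℝ → ℝ} (hg : Measurable g) {f : ℝ → ℝ} (hf : Measurable f) (hf0 : ∀ y, 0 ≤ f y)
    (hmap : P.map X = volume.withDensity (fun y => ENNReal.ofReal (f y))) :
    variance (fun ω => g (X ω)) P ≤ ∫ y, f y * g y ^ 2 :=
  calc variance (fun ω => g (X ω)) P
      ≤ ∫ ω, g (X ω) ^ 2 ∂P :=
        variance_le_expectation_sq (X := fun ω => g (X ω)) (hg.comp hX).aestronglyMeasurable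
    _ = ∫ y, g y ^ 2 ∂(P.map X) :=
        (integral_map hX.aemeasurable (hg.pow_const 2).aestronglyMeasurable).symm
    _ = ∫ y, f y * g y ^ 2 := by
        rw [hmap, integral_withDensity_eq_integral_toReal_smul hf.ennreal_ofReal
          (ae_of_all _ fun _ => ENNReal.ofReal_lt_top)]
        simp only [ENNReal.toReal_ofReal (hf0 _), smul_eq_mul]

lemma variance_average_le {ι : Type*} [Fintype ι] {Y : ι → Ω → ℝ} (hY : ∀ i, MemLp (Y i) 2 P)
    (hind : Pairwise fun i j => IndepFun (Y i) (Y j) P) {V : ℝ}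
    (hV : ∀ i, variance (Y i) P ≤ V) :
    variance (fun ω => 1 / (Fintype.card ι : ℝ) * ∑ i, Y i ω) P ≤ V / Fintype.card ι := by
  have hsum : variance (fun ω => ∑ i, Y i ω) P = ∑ i, variance (Y i) P := by
    simpa only [Finset.sum_fn] using
      IndepFun.variance_sum (s := Finset.univ) (fun i _ => hY i) fun i _ j _ hij => hind hij
  rw [variance_const_mul, hsum]
  calc (1 / (Fintype.card ι : ℝ)) ^ 2 * ∑ i, variance (Y i) P
      ≤ (1 / (Fintype.card ι : ℝ)) ^ 2 * (Fintype.card ι * V) := by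
        gcongr
        simpa using Finset.sum_le_sum fun i (_ : i ∈ Finset.univ) => hV i
    _ = V / Fintype.card ι := by
        rcases eq_or_ne (Fintype.card ι : ℝ) 0 with h | h
        · simp [h]
        · field_simp

end Variance

lemma variance_average_gaussDensityDeriv_le {Ω ι : Type*} [MeasurableSpace Ω] {P : Measure Ω}
    [IsProbabilityMeasure P] [Fintype ι] {X : ι → Ω → ℝ} (hXm : ∀ i, Measurable (X i))
    (hind : iIndepFun X P) {f : ℝ → ℝ} (hfm : Measurable f) (hf0 : ∀ y, 0 ≤ f y)
    (hfi : Integrable f)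
    (hmap : ∀ i, P.map (X i) = volume.withDensity (fun y => ENNReal.ofReal (f y)))
    {t : ℝ} (ht : 0 < t) (x : ℝ) :
    variance (fun ω => 1 / (Fintype.card ι : ℝ) * ∑ i, gaussDensityDeriv t (x - X i ω)) P
      ≤ 1 / (Fintype.card ι * (t * √t)) * ∫ μ, f μ * gaussDensity t (x - μ) := by
  set g : ℝ → ℝ := fun μ => gaussDensityDeriv t (x - μ)
  have hg : Measurable g := by simp only [g, gaussDensityDeriv, gaussDensity]; fun_prop
  have hφ_le (u : ℝ) : gaussDensity t u / (t * √t) ≤ (√(2 * π * t))⁻¹ / (t * √t) := by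
    gcongr; exact gaussDensity_le ht.le u
  have hg_bdd (μ : ℝ) : |g μ| ≤ √((√(2 * π * t))⁻¹ / (t * √t)) :=
    abs_le_sqrt ((sq_gaussDensityDeriv_le ht _).trans (hφ_le _))
  have hφ_int : Integrable fun μ => f μ * (gaussDensity t (x - μ) / (t * √t)) :=
    hfi.mul_bdd (by unfold gaussDensity; fun_prop) (ae_of_all _ fun μ => by
      rw [norm_of_nonneg (by have := gaussDensity_nonneg t (x - μ); positivity)]
      exact hφ_le _)
  have hmemLp (i : ι) : MemLp (fun ω => g (X i ω)) 2 P :=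
    .of_bound (hg.comp (hXm i)).aestronglyMeasurable _ (ae_of_all _ fun _ => hg_bdd _)
  have hvar (i : ι) :
      variance (fun ω => g (X i ω)) P ≤ ∫ μ, f μ * (gaussDensity t (x - μ) / (t * √t)) :=
    (variance_comp_le_integral_mul_sq (hXm i) hg hfm hf0 (hmap i)).trans <|
      integral_mono_of_nonneg (ae_of_all _ fun μ => mul_nonneg (hf0 μ) (sq_nonneg _)) hφ_int
        (ae_of_all _ fun μ => mul_le_mul_of_nonneg_left (sq_gaussDensityDeriv_le ht _) (hf0 μ))
  refine (variance_average_le hmemLp (fun i j hij => (hind.indepFun hij).comp hg hg)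
    hvar).trans_eq ?_
  simp_rw [mul_div_assoc']
  rw [integral_div]
  field_simp

/-- Given `n` i.i.d. samples `X j` from a density `f` supported on `[-1,1]` with `f ≤ C_d`,
the unbiased estimator `ψ̂(x,t) = (1/n) ∑_j ((X_j - x)/t) φ_t(x - X_j)` of `(φ_t' * f)(x)`
satisfies, for a universal constant `K`,
`Var(ψ̂(x,t)) ≤ (K/(n t^{3/2})) E_{z~N(0,1)}[f(x + √t z)]` for every `x` and `t > 0`;
consequently `∫ Var(ψ̂(x,t)) dx ≤ K/(n t^{3/2})`. -/
theorem psi_hat_variance_bound :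
    ∃ K : ℝ, 0 < K ∧
      ∀ (Ω : Type) (_ : MeasurableSpace Ω) (P : Measure Ω), IsProbabilityMeasure P →
      ∀ (n : ℕ), 0 < n →
      ∀ (X : Fin n → Ω → ℝ), (∀ j, Measurable (X j)) →
      iIndepFun X P →
      ∀ (f : ℝ → ℝ) (C_d : ℝ), 0 < C_d → (∀ x, 0 ≤ f x) → Measurable f →
      (∀ x, x ∉ Set.Icc (-1 : ℝ) 1 → f x = 0) → (∀ x, f x ≤ C_d) → (∫ x, f x = 1) →
      (∀ j, Measure.map (X j) P = volume.withDensity (fun μ => ENNReal.ofReal (f μ))) →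
      ∀ t : ℝ, 0 < t →
        ((∀ x : ℝ,
          variance (fun ω => (1 / (n : ℝ)) * ∑ j, ((X j ω - x) / t) *
              gaussDensity t (x - X j ω)) P
            ≤ K / ((n : ℝ) * (t * Real.sqrt t)) *
                ∫ z, stdGauss z * f (x + Real.sqrt t * z)) ∧
        (∫ x : ℝ,
            variance (fun ω => (1 / (n : ℝ)) * ∑ j, ((X j ω - x) / t) *
              gaussDensity t (x - X j ω)) P)
          ≤ K / ((n : ℝ) * (t * Real.sqrt t))) := by
  refine ⟨1, one_pos, fun Ω _ P _ n _ X hXm hind f _ _ hf0 hfm _ _ hf_one hmap t ht => ?_⟩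
  have hfi : Integrable f := .of_integral_ne_zero (by rw [hf_one]; exact one_ne_zero)
  have hvar (x : ℝ) :
      variance (fun ω => (1 / (n : ℝ)) * ∑ j, ((X j ω - x) / t) * gaussDensity t (x - X j ω)) P
        ≤ 1 / (n * (t * √t)) * ∫ μ, f μ * gaussDensity t (x - μ) := by
    simpa only [div_mul_gaussDensity_sub, Fintype.card_fin] using
      variance_average_gaussDensityDeriv_le hXm hind hfm hf0 hfi hmap ht x
  refine ⟨fun x => (hvar x).trans_eq (by rw [integral_mul_gaussDensity_sub ht]), ?_⟩
  calc _ ≤ ∫ x, 1 / (n * (t * √t)) * ∫ μ, f μ * gaussDensity t (x - μ) :=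
        integral_mono_of_nonneg (ae_of_all _ fun _ => variance_nonneg _ _)
          ((integrable_integral_mul_gaussDensity_sub ht.le hfi).const_mul _) (ae_of_all _ hvar)
    _ = 1 / (n * (t * √t)) := by
        rw [integral_const_mul, integral_integral_mul_gaussDensity_sub ht hfi, hf_one, mul_one]
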